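/- arXiv:1702.04559 — 3 statements merged into one kernel-verified Lean document; each statement's English description precedes it below -/
import Mathlib

section
/- Let q be any prime power. Then the covering radius of PGL₂(q), viewed as a set of permutations of the projective line Ω = F_q ∪ {∞} via its action by fractional linear transformations, equals q − 2 if q is even and equals q − 3 if q is odd. -/
open scoped OnePoint

open scoped Classical in
/-- The fractional linear transformation `x ↦ (a*x+b)/(c*x+d)` on the projective line
`Ω = F ∪ {∞}`, with the usual conventions at `∞` and at the pole. -/
noncomputable def moebius {F : Type*} [Field F] (a b c d : F) : OnePoint F → OnePoint F :=
  fun x => Option.elim x (if c = 0 then ∞ else ((a / c : F) : OnePoint F))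
    (fun t => if c * t + d = 0 then ∞ else (((a * t + b) / (c * t + d) : F) : OnePoint F))

/-- `PGL₂(F)` regarded as the set of permutations of the projective line `Ω = F ∪ {∞}`
induced by fractional linear transformations. -/
def PGLset (F : Type*) [Field F] : Set (Equiv.Perm (OnePoint F)) :=
  { v | ∃ a b c d : F, a * d - b * c ≠ 0 ∧ ∀ x, v x = moebius a b c d x }

/-- The Hamming distance `d(g,h) = |Ω| - |fix (g * h⁻¹)|` on the symmetric group. -/
noncomputable def permDist {Ω : Type*} [Fintype Ω] (g h : Equiv.Perm Ω) : ℕ :=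
  Fintype.card Ω - (Function.fixedPoints ⇑(g * h⁻¹)).ncard

/-- The covering radius of a set `C` of permutations:
`Cr(C) = max over v of min over c ∈ C of d(v,c)`. -/
noncomputable def coveringRadius {Ω : Type*} [Fintype Ω] (C : Set (Equiv.Perm Ω)) : ℕ :=
  sSup { n | ∃ v : Equiv.Perm Ω, n = sInf { m | ∃ c ∈ C, m = permDist v c } }

/-!
Let `A(v, g)` be the set of points where the permutations `v` and `g` agree. Then
`d(v, g) = q + 1 - |A(v, g)|`, so `Cr(PGL₂(q)) = q + 1 - k` where `k = min_v max_g |A(v, g)|`.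

Since `PGL₂(q)` is 3-transitive, `k ≥ 3`. For odd `q` in fact `k ≥ 4`: compose `v` with an element
of `PGL₂(q)` so that it fixes `∞` and `0`. If `t ↦ v(t)/t` were injective on `F_q^×`, it would be
a bijection of `F_q^×`, so the product of its values would be `1` (the `v(t)` permute the `t`) and
also `∏ F_q^× = -1` (Wilson). Hence `v(w₁)/w₁ = v(w₂)/w₂ = α` for some `w₁ ≠ w₂`, and `v` agrees
with `t ↦ αt` at `∞, 0, w₁, w₂`.

Conversely, if `t ↦ N(t)/D(t)` permutes `F_q`, its extension by `∞ ↦ ∞` agrees with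
`(at + b)/(ct + d)` only at roots of `N(cX + d) - D(aX + b)`, and at `∞` only if `c = 0`; so in at
most `max(deg N, deg D + 1) + 1` points. This gives `k ≤ 3` via `t ↦ t²` for even `q`, and `k ≤ 4`
via `t ↦ t³` if `3 ∤ q - 1` and via the Rédei function `(t³ + 3pt)/(3t² + p)`, `p` a non-square,
if `3 ∣ q - 1` (then `-3` is a square).
-/

open Equiv Polynomial OnePoint Matrix

section CoveringRadius

variable {Ω : Type*} [Fintype Ω]

theorem permDist_eq_card_sub_ncard (v g : Perm Ω) :
    permDist v g = Fintype.card Ω - {x | v x = g x}.ncard := by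
  have hfix : Function.fixedPoints ⇑(v * g⁻¹) = g '' {x | v x = g x} := by
    ext y
    simp [Function.IsFixedPt]
  rw [permDist, hfix, Set.ncard_image_of_injective _ g.injective]

theorem coveringRadius_eq_card_sub {C : Set (Perm Ω)} (hC : C.Nonempty) (k : ℕ)
    (hcover : ∀ v : Perm Ω, ∃ c ∈ C, k ≤ {x | v x = c x}.ncard)
    (hfar : ∃ v : Perm Ω, ∀ c ∈ C, {x | v x = c x}.ncard ≤ k) :
    coveringRadius C = Fintype.card Ω - k := by
  obtain ⟨v₀, hv₀⟩ := hfar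
  have hbdd : ∀ n ∈ {n | ∃ v : Perm Ω, n = sInf {m | ∃ c ∈ C, m = permDist v c}},
      n ≤ Fintype.card Ω - k := by
    rintro n ⟨v, rfl⟩
    obtain ⟨c, hc, hk⟩ := hcover v
    calc sInf {m | ∃ c ∈ C, m = permDist v c} ≤ permDist v c := Nat.sInf_le ⟨c, hc, rfl⟩
      _ ≤ Fintype.card Ω - k := by
        rw [permDist_eq_card_sub_ncard]
        exact Nat.sub_le_sub_left hk _
  have hv₀_far : Fintype.card Ω - k ≤ sInf {m | ∃ c ∈ C, m = permDist v₀ c} := by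
    obtain ⟨c₀, hc₀⟩ := hC
    refine le_csInf ⟨_, c₀, hc₀, rfl⟩ ?_
    rintro m ⟨c, hc, rfl⟩
    rw [permDist_eq_card_sub_ncard]
    exact Nat.sub_le_sub_left (hv₀ c hc) _
  exact le_antisymm (csSup_le ⟨_, v₀, rfl⟩ hbdd) (hv₀_far.trans (le_csSup ⟨_, hbdd⟩ ⟨v₀, rfl⟩))

end CoveringRadius

theorem exists_ne_div_eq_div_of_prod_ne_one {G : Type*} [CommGroup G] [Fintype G]
    (hG : ∏ a : G, a ≠ 1) {σ : G → G} (hσ : Function.Injective σ) :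
    ∃ a b, a ≠ b ∧ σ a / a = σ b / b := by
  by_contra! h
  have hdiv : Function.Injective fun a => σ a / a := fun a b hab => by_contra (h a b · hab)
  apply hG
  calc ∏ a, a = ∏ a, σ a / a :=
        (Fintype.prod_bijective _ hdiv.bijective_of_finite _ _ fun _ => rfl).symm
    _ = (∏ a, σ a) / ∏ a, a := Finset.prod_div_distrib ..
    _ = 1 := by
      rw [Fintype.prod_bijective σ hσ.bijective_of_finite σ (fun a => a) fun _ => rfl, div_self']

section FiniteField

variable {F : Type*} [Field F] [Fintype F]

theorem FiniteField.exists_ne_apply_eq_mul (hchar : ringChar F ≠ 2) (f : Perm F)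
    (hf : f 0 = 0) : ∃ α w₁ w₂ : Fˣ, w₁ ≠ w₂ ∧ f w₁ = α * w₁ ∧ f w₂ = α * w₂ := by
  classical
  have hG : ∏ a : Fˣ, a ≠ 1 := by
    rw [FiniteField.prod_univ_units_id_eq_neg_one, Ne, Units.ext_iff, Units.val_neg,
      Units.val_one, neg_one_eq_one_iff]
    exact hchar
  have hf0 (w : Fˣ) : f w ≠ 0 := hf ▸ f.injective.ne w.ne_zero
  obtain ⟨w₁, w₂, hne, hdiv⟩ := exists_ne_div_eq_div_of_prod_ne_one hG
    (σ := fun w => Units.mk0 (f w) (hf0 w))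
    (fun a b hab => Units.ext (f.injective (congrArg Units.val hab)))
  refine ⟨Units.mk0 (f w₁) (hf0 w₁) / w₁, w₁, w₂, hne, ?_, ?_⟩
  · simp
  · rw [hdiv]; simp

theorem FiniteField.pow_injective_of_coprime {n : ℕ} (hn : n ≠ 0)
    (hcop : n.Coprime (Fintype.card F - 1)) : Function.Injective fun x : F => x ^ n := by
  intro x y hxy
  simp only at hxy
  by_cases hy : y = 0
  · rw [hy, zero_pow hn, pow_eq_zero_iff hn] at hxy
    rw [hxy, hy]
  have hx : x ≠ 0 := fun hx => hy (by rwa [hx, zero_pow hn, eq_comm, pow_eq_zero_iff hn] at hxy)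
  have h1 : (x / y) ^ n.gcd (Fintype.card F - 1) = 1 :=
    pow_gcd_eq_one.mpr ⟨by rw [div_pow, hxy, div_self (pow_ne_zero n hy)],
      FiniteField.pow_card_sub_one_eq_one _ (div_ne_zero hx hy)⟩
  rwa [hcop, pow_one, div_eq_one_iff_eq hy] at h1

theorem FiniteField.exists_sq_eq_neg_three (h3 : 3 ∣ Fintype.card F - 1) :
    ∃ s : F, s ^ 2 = -3 ∧ s ≠ 0 := by
  classical
  have : Fact (Nat.Prime 3) := ⟨Nat.prime_three⟩
  obtain ⟨ζ, hζ⟩ := exists_prime_orderOf_dvd_card (G := Fˣ) 3 (by rwa [Fintype.card_units])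
  have hζ3 : (ζ : F) ^ 3 = 1 := by
    rw [← Units.val_pow_eq_pow_val, ← hζ, pow_orderOf_eq_one, Units.val_one]
  have hζ1 : (ζ : F) - 1 ≠ 0 := fun h => by
    simp [Units.val_eq_one.mp (sub_eq_zero.mp h)] at hζ
  have hquad : (ζ : F) ^ 2 + ζ + 1 = 0 :=
    (mul_eq_zero.mp (by linear_combination hζ3)).resolve_left hζ1
  -- If `2ζ + 1 = 0` then `3 = -(2ζ + 1)² = 0`, so `0 = ζ² + ζ + 1 = (ζ - 1)²`.
  refine ⟨2 * ζ + 1, by linear_combination 4 * hquad, fun h => hζ1 ?_⟩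
  exact pow_eq_zero_iff two_ne_zero |>.mp <| by
    linear_combination (1 - 4 * (ζ : F)) * hquad + ζ * (2 * ζ + 1) * h

end FiniteField

theorem OnePoint.ncard_le_ncard_preimage_coe_add_one {X : Type*} [Fintype X]
    (s : Set (OnePoint X)) : s.ncard ≤ (((↑) : X → OnePoint X) ⁻¹' s).ncard + 1 := by
  have hs : s ⊆ insert ∞ (((↑) : X → OnePoint X) '' ((↑) ⁻¹' s)) := by
    intro x hx
    cases x with
    | infty => exact Set.mem_insert _ _
    | coe t => exact Set.mem_insert_of_mem _ ⟨t, hx, rfl⟩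
  grw [Set.ncard_le_ncard hs, Set.ncard_insert_le,
    Set.ncard_image_of_injective _ coe_injective]

theorem OnePoint.ncard_preimage_coe_of_infty_notMem {X : Type*} [Fintype X]
    {s : Set (OnePoint X)} (h : ∞ ∉ s) : (((↑) : X → OnePoint X) ⁻¹' s).ncard = s.ncard := by
  rw [← Set.ncard_image_of_injective _ coe_injective, Set.image_preimage_eq_of_subset]
  exact fun x hx => ne_infty_iff_exists.mp (ne_of_mem_of_not_mem hx h)

section Redei

variable {F : Type*} [Field F] {p s : F}

theorem redei_denom_ne_zero (hp : ¬IsSquare p) (hs : s ^ 2 = -3) (t : F) : 3 * t ^ 2 + p ≠ 0 :=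
  fun h => hp ⟨s * t, by linear_combination h - t ^ 2 * hs⟩

theorem redei_injective (hp : ¬IsSquare p) (hs : s ^ 2 = -3) (hs0 : s ≠ 0) :
    Function.Injective fun t : F => (t ^ 3 + 3 * p * t) / (3 * t ^ 2 + p) := by
  intro x y hxy
  by_contra hne
  rw [div_eq_div_iff (redei_denom_ne_zero hp hs x) (redei_denom_ne_zero hp hs y)] at hxy
  have hE : 3 * x ^ 2 * y ^ 2 + p * x ^ 2 + p * y ^ 2 - 8 * p * x * y + 3 * p ^ 2 = 0 := by
    refine (mul_eq_zero.mp ?_).resolve_left (sub_ne_zero.mpr hne)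
    linear_combination hxy
  have hy : s * (y ^ 2 - p) ≠ 0 :=
    mul_ne_zero hs0 (sub_ne_zero.mpr fun h => hp ⟨y, by rw [← h, sq]⟩)
  -- `(3y² + p) E = ((3y² + p)x - 4py)² + 3p(y² - p)²` and `-3 = s²`, so `E = 0` makes `p` a square.
  refine hp ⟨((3 * y ^ 2 + p) * x - 4 * p * y) / (s * (y ^ 2 - p)), ?_⟩
  rw [div_mul_div_comm, eq_div_iff (mul_ne_zero hy hy)]
  linear_combination (-(3 * y ^ 2 + p)) * hE + (p * (y ^ 2 - p) ^ 2) * hs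

theorem redei_ne_moebius (hp : p ≠ 0) (h2 : (2 : F) ≠ 0) (g : GL (Fin 2) F) :
    (X ^ 3 + C (3 * p) * X) * (C (g 1 0) * X + C (g 1 1)) ≠
      (C 3 * X ^ 2 + C p) * (C (g 0 0) * X + C (g 0 1)) := by
  intro h
  apply g.det_ne_zero
  have h' : C (g 1 0) * X ^ 4 + C (g 1 1 - 3 * g 0 0) * X ^ 3
      + C (3 * p * g 1 0 - 3 * g 0 1) * X ^ 2 + C (3 * p * g 1 1 - p * g 0 0) * X
      - C (p * g 0 1) = 0 := by
    simp only [map_sub, map_mul] at h ⊢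
    linear_combination h
  have h4 := congrArg (coeff · 4) h'
  have h3 := congrArg (coeff · 3) h'
  have h1 := congrArg (coeff · 1) h'
  have h0 := congrArg (coeff · 0) h'
  simp only [coeff_add, coeff_sub, coeff_C_mul, coeff_X_pow, coeff_X, coeff_C, coeff_zero]
    at h4 h3 h1 h0
  norm_num at h4 h3 h1 h0
  have ha : g 0 0 = 0 := by
    have : p * 2 ^ 3 * g 0 0 = 0 := by linear_combination h1 - 3 * p * h3
    exact (mul_eq_zero.mp this).resolve_left (mul_ne_zero hp (pow_ne_zero 3 h2))
  rw [det_fin_two, ha, h4, h0.resolve_left hp]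
  ring

end Redei

section ProjectiveLine

variable {F : Type*} [Field F] [DecidableEq F]

theorem moebius_eq_smul (g : GL (Fin 2) F) (x : OnePoint F) :
    moebius (g 0 0) (g 0 1) (g 1 0) (g 1 1) x = g • x := by
  cases x with
  | infty => rw [smul_infty_eq_ite]; exact ite_congr rfl (fun _ => rfl) (fun _ => rfl)
  | coe t => rw [smul_some_eq_ite]; exact ite_congr rfl (fun _ => rfl) (fun _ => rfl)

theorem mem_PGLset_iff {v : Perm (OnePoint F)} :
    v ∈ PGLset F ↔ ∃ g : GL (Fin 2) F, ∀ x, v x = g • x := by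
  constructor
  · rintro ⟨a, b, c, d, hdet, hv⟩
    refine ⟨GeneralLinearGroup.mkOfDetNeZero !![a, b; c, d] (by rwa [det_fin_two_of]), fun x => ?_⟩
    rw [hv, ← moebius_eq_smul]
    rfl
  · rintro ⟨g, hv⟩
    refine ⟨g 0 0, g 0 1, g 1 0, g 1 1, by simpa [det_fin_two] using g.det_ne_zero, fun x => ?_⟩
    rw [hv, moebius_eq_smul]

theorem exists_smul_eq_infty (x : OnePoint F) : ∃ g : GL (Fin 2) F, g • x = ∞ := by
  cases x with
  | infty => exact ⟨1, one_smul _ _⟩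
  | coe t =>
    refine ⟨GeneralLinearGroup.mkOfDetNeZero !![0, 1; 1, -t] (by simp [det_fin_two_of]), ?_⟩
    simp [smul_some_eq_ite]

theorem exists_smul_infty_zero_one {s t : F} (hst : s ≠ t) :
    ∃ g : GL (Fin 2) F, g • (∞ : OnePoint F) = ∞ ∧ g • (s : OnePoint F) = ((0 : F) : OnePoint F) ∧
      g • (t : OnePoint F) = ((1 : F) : OnePoint F) := by
  have hts : t - s ≠ 0 := sub_ne_zero.mpr hst.symm
  refine ⟨GeneralLinearGroup.mkOfDetNeZero !![1, -s; 0, t - s] (by simpa [det_fin_two_of]), ?_⟩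
  simp [smul_some_eq_ite, smul_infty_eq_ite, hts, ← sub_eq_add_neg]

theorem exists_smul_eq_infty_zero_one {x y z : OnePoint F} (hxy : x ≠ y) (hxz : x ≠ z)
    (hyz : y ≠ z) : ∃ g : GL (Fin 2) F, g • x = ∞ ∧ g • y = ((0 : F) : OnePoint F) ∧
      g • z = ((1 : F) : OnePoint F) := by
  obtain ⟨g, hg⟩ := exists_smul_eq_infty x
  have hinj : Function.Injective fun x : OnePoint F => g • x := MulAction.injective g
  obtain ⟨s, hs⟩ := ne_infty_iff_exists.mp (hg ▸ (hinj.ne hxy).symm)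
  obtain ⟨t, ht⟩ := ne_infty_iff_exists.mp (hg ▸ (hinj.ne hxz).symm)
  obtain ⟨h, h_infty, h_s, h_t⟩ := exists_smul_infty_zero_one (s := s) (t := t)
    (fun hst => hinj.ne hyz (by rw [← hs, ← ht, hst]))
  exact ⟨h * g, by rw [mul_smul, hg, h_infty], by rw [mul_smul, ← hs, h_s],
    by rw [mul_smul, ← ht, h_t]⟩

theorem exists_smul_apply_infty_zero_one (v : Perm (OnePoint F)) :
    ∃ g : GL (Fin 2) F, g • v ∞ = ∞ ∧ g • v ((0 : F) : OnePoint F) = ((0 : F) : OnePoint F) ∧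
      g • v ((1 : F) : OnePoint F) = ((1 : F) : OnePoint F) :=
  exists_smul_eq_infty_zero_one (v.injective.ne (infty_ne_coe 0))
    (v.injective.ne (infty_ne_coe 1)) (v.injective.ne (by simp))

variable [Fintype F]

theorem coveringRadius_PGLset_eq (k : ℕ)
    (hcover : ∀ v : Perm (OnePoint F), ∃ g : GL (Fin 2) F, k ≤ {x | v x = g • x}.ncard)
    (hfar : ∃ v : Perm (OnePoint F), ∀ g : GL (Fin 2) F, {x | v x = g • x}.ncard ≤ k) :
    coveringRadius (PGLset F) = Fintype.card F + 1 - k := by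
  have hmem (g : GL (Fin 2) F) : MulAction.toPerm g ∈ PGLset F :=
    mem_PGLset_iff.mpr ⟨g, fun _ => rfl⟩
  rw [coveringRadius_eq_card_sub ⟨_, hmem 1⟩ k]
  · exact congrArg (· - k) Fintype.card_option
  · intro v
    obtain ⟨g, hg⟩ := hcover v
    exact ⟨_, hmem g, hg⟩
  · obtain ⟨v, hv⟩ := hfar
    refine ⟨v, fun c hc => ?_⟩
    obtain ⟨g, hg⟩ := mem_PGLset_iff.mp hc
    simpa only [hg] using hv g

theorem exists_three_le_ncard_agree (v : Perm (OnePoint F)) :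
    ∃ g : GL (Fin 2) F, 3 ≤ {x | v x = g • x}.ncard := by
  obtain ⟨g, h_infty, h0, h1⟩ := exists_smul_apply_infty_zero_one v
  refine ⟨g⁻¹, le_of_eq_of_le ?_
    (Set.ncard_le_ncard (s := {∞, ((0 : F) : OnePoint F), ((1 : F) : OnePoint F)}) ?_)⟩
  · rw [Set.ncard_insert_of_notMem (by simp), Set.ncard_pair (by simp)]
  · simp only [Set.insert_subset_iff, Set.singleton_subset_iff, Set.mem_ofPred_eq,
      eq_inv_smul_iff]
    exact ⟨h_infty, h0, h1⟩

theorem exists_four_le_ncard_agree (hchar : ringChar F ≠ 2) (v : Perm (OnePoint F)) :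
    ∃ g : GL (Fin 2) F, 4 ≤ {x | v x = g • x}.ncard := by
  obtain ⟨g, h_infty, h0, -⟩ := exists_smul_apply_infty_zero_one v
  set u : Perm (OnePoint F) := MulAction.toPerm g * v
  have hu (t : F) : u t = (removeNone u t : OnePoint F) := by
    refine (removeNone_some u (Option.ne_none_iff_exists'.mp fun h => ?_)).symm
    exact infty_ne_coe t (u.injective (h_infty.trans h.symm))
  obtain ⟨α, w₁, w₂, hne, hw₁, hw₂⟩ := FiniteField.exists_ne_apply_eq_mul hchar (removeNone u)
    (OnePoint.coe_injective ((hu 0).symm.trans h0))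
  set h := GeneralLinearGroup.mkOfDetNeZero !![(α : F), 0; 0, 1] (by simp [det_fin_two_of])
  have h_infty' : h • (∞ : OnePoint F) = ∞ := by simp [h, smul_infty_eq_ite]
  have h_coe (t : F) : h • (t : OnePoint F) = ((α * t : F) : OnePoint F) := by
    simp [h, smul_some_eq_ite]
  refine ⟨g⁻¹ * h, le_of_eq_of_le ?_ (Set.ncard_le_ncard
    (s := {∞, ((0 : F) : OnePoint F), ((w₁ : F) : OnePoint F), ((w₂ : F) : OnePoint F)}) ?_)⟩
  · rw [Set.ncard_insert_of_notMem (by simp), Set.ncard_insert_of_notMem (by simp [eq_comm]),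
      Set.ncard_pair (by simpa [Units.val_inj] using hne)]
  · simp only [Set.insert_subset_iff, Set.singleton_subset_iff, Set.mem_ofPred_eq, mul_smul,
      eq_inv_smul_iff]
    refine ⟨h_infty.trans h_infty'.symm, ?_, ?_, ?_⟩
    · rw [h0, h_coe, mul_zero]
    · rw [h_coe, ← hw₁]; exact hu w₁
    · rw [h_coe, ← hw₂]; exact hu w₂

theorem exists_perm_ncard_agree_le_of_eval_div {N D : F[X]} {m : ℕ} (hN : N.natDegree ≤ m)
    (hD : D.natDegree < m) (hD_ne_zero : ∀ t, D.eval t ≠ 0)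
    (hinj : Function.Injective fun t => N.eval t / D.eval t)
    (hmoebius : ∀ g : GL (Fin 2) F,
      N * (C (g 1 0) * X + C (g 1 1)) ≠ D * (C (g 0 0) * X + C (g 0 1))) :
    ∃ v : Perm (OnePoint F), ∀ g : GL (Fin 2) F, {x | v x = g • x}.ncard ≤ m + 1 := by
  set v : Perm (OnePoint F) := optionCongr (Equiv.ofBijective _ hinj.bijective_of_finite)
  refine ⟨v, fun g => ?_⟩
  set P := N * (C (g 1 0) * X + C (g 1 1)) - D * (C (g 0 0) * X + C (g 0 1))
  have hroot : ((↑) : F → OnePoint F) ⁻¹' {x | v x = g • x} ⊆ P.rootSet F := by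
    intro t ht
    rw [Set.mem_preimage, Set.mem_ofPred_eq, smul_some_eq_ite] at ht
    split_ifs at ht with hpole
    · exact absurd ht (coe_ne_infty _)
    · have key : eval t N / eval t D = _ := coe_eq_coe.mp ht
      rw [div_eq_div_iff (hD_ne_zero t) hpole] at key
      refine (mem_rootSet (p := P)).mpr ⟨sub_ne_zero.mpr (hmoebius g), ?_⟩
      simp only [P, coe_aeval_eq_eval, eval_sub, eval_mul, eval_add, eval_C, eval_X]
      linear_combination key
  have hD_lin : (D * (C (g 0 0) * X + C (g 0 1))).natDegree ≤ m :=
    (natDegree_mul_le_of_le (Nat.le_sub_one_of_lt hD) natDegree_linear_le).trans (by omega)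
  by_cases hc : g 1 0 = 0
  · have hP : P.natDegree ≤ m := by
      have hN_lin : (N * C (g 1 1)).natDegree ≤ m := natDegree_mul_le_of_le hN (natDegree_C _).le
      simpa [P, hc] using natDegree_sub_le_of_le hN_lin hD_lin
    calc {x | v x = g • x}.ncard ≤ (((↑) : F → OnePoint F) ⁻¹' {x | v x = g • x}).ncard + 1 :=
          ncard_le_ncard_preimage_coe_add_one _
      _ ≤ m + 1 := by grw [Set.ncard_le_ncard hroot, ncard_rootSet_le, hP]
  · have hP : P.natDegree ≤ m + 1 := (natDegree_sub_le _ _).trans <|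
      max_le (natDegree_mul_le_of_le hN natDegree_linear_le) (hD_lin.trans m.le_succ)
    have h_infty : ∞ ∉ {x | v x = g • x} := by
      rw [Set.mem_ofPred_eq, smul_infty_eq_ite, if_neg hc]
      exact infty_ne_coe _
    rw [← ncard_preimage_coe_of_infty_notMem h_infty]
    grw [Set.ncard_le_ncard hroot, ncard_rootSet_le, hP]

theorem exists_perm_ncard_agree_le_of_coprime {n : ℕ} (hn : 2 ≤ n)
    (hcop : n.Coprime (Fintype.card F - 1)) :
    ∃ v : Perm (OnePoint F), ∀ g : GL (Fin 2) F, {x | v x = g • x}.ncard ≤ n + 1 := by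
  refine exists_perm_ncard_agree_le_of_eval_div (N := X ^ n) (D := 1) (natDegree_X_pow_le n)
    (by rw [natDegree_one]; omega) (by simp)
    (by simpa using FiniteField.pow_injective_of_coprime (by omega) hcop)
    fun g h => g.det_ne_zero ?_
  have h' : C (g 1 0) * X ^ (n + 1) + C (g 1 1) * X ^ n = C (g 0 0) * X + C (g 0 1) := by
    linear_combination h
  have hc : g 1 0 = 0 := by
    simpa [coeff_X, coeff_C, show n ≠ 0 by omega] using congrArg (coeff · (n + 1)) h'
  have hd : g 1 1 = 0 := by
    simpa [coeff_X_of_ne_one (show n ≠ 1 by omega), coeff_C, show n ≠ 0 by omega]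
      using congrArg (coeff · n) h'
  rw [det_fin_two, hc, hd]
  ring

theorem exists_perm_ncard_agree_le_four (hchar : ringChar F ≠ 2) :
    ∃ v : Perm (OnePoint F), ∀ g : GL (Fin 2) F, {x | v x = g • x}.ncard ≤ 4 := by
  by_cases h3 : 3 ∣ Fintype.card F - 1
  · obtain ⟨s, hs, hs0⟩ := FiniteField.exists_sq_eq_neg_three h3
    obtain ⟨p, hp⟩ := FiniteField.exists_nonsquare hchar
    have hp0 : p ≠ 0 := fun h => hp (h ▸ IsSquare.zero)
    refine exists_perm_ncard_agree_le_of_eval_div (N := X ^ 3 + C (3 * p) * X)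
      (D := C 3 * X ^ 2 + C p) (m := 3) (by compute_degree)
      ((by compute_degree : _ ≤ 2).trans_lt (by norm_num))
      (by simpa using redei_denom_ne_zero hp hs) ?_ (redei_ne_moebius hp0 (Ring.two_ne_zero hchar))
    simpa [mul_assoc] using redei_injective hp hs hs0
  · exact exists_perm_ncard_agree_le_of_coprime (n := 3) (by norm_num)
      ((Nat.Prime.coprime_iff_not_dvd Nat.prime_three).mpr h3)

end ProjectiveLine

theorem coveringRadius_PGL2_general
    (q : ℕ)
    (F : Type*) [Field F] [Fintype F] (hF : Fintype.card F = q) :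
    (Even q → coveringRadius (PGLset F) = q - 2) ∧
    (Odd q → coveringRadius (PGLset F) = q - 3) := by
  classical
  subst hF
  refine ⟨fun hq => ?_, fun hq => ?_⟩
  · have hcop : Nat.Coprime 2 (Fintype.card F - 1) :=
      Nat.coprime_two_left.mpr (Nat.Even.sub_odd Fintype.card_pos hq odd_one)
    rw [coveringRadius_PGLset_eq 3 exists_three_le_ncard_agree
      (exists_perm_ncard_agree_le_of_coprime le_rfl hcop)]
    omega
  · have hchar : ringChar F ≠ 2 := fun h =>
      Nat.not_even_iff_odd.mpr hq (Nat.even_iff.mpr (FiniteField.even_card_iff_char_two.mp h))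
    rw [coveringRadius_PGLset_eq 4 (exists_four_le_ncard_agree hchar)
      (exists_perm_ncard_agree_le_four hchar)]
    omega

/-- For every prime power `q`, the covering radius of `PGL₂(q)`, viewed as a set of
permutations of the projective line `Ω = F_q ∪ {∞}`, equals `q - 2` if `q` is even
and `q - 3` if `q` is odd. -/
theorem coveringRadius_PGL2
    (q : ℕ) (hq : IsPrimePow q)
    (F : Type*) [Field F] [Fintype F] (hF : Fintype.card F = q) :
    (Even q → coveringRadius (PGLset F) = q - 2) ∧
    (Odd q → coveringRadius (PGLset F) = q - 3) :=
  coveringRadius_PGL2_general q F hF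
end

section
/- Let q be an odd prime power and let ρ ∈ F_{q²} satisfy ρ^{q+1} = −1 and ρ ∉ F_q. Then for every x in the subfield F_q, the element y = (x + ρ)/(1 − ρx) of F_{q²} satisfies y^{q+1} = −1. -/
/-!
Raising to the `q`-th power is a field automorphism `σ` of `F_{q²}` fixing `x`, so
`y^(q+1) = σ y * y = (x + σ ρ)(x + ρ) / ((1 - σ ρ x)(1 - ρ x))`. Expanding with
`σ ρ * ρ = -1`, the numerator is `x² + (ρ + σ ρ) x - 1` and the denominator is its negative.
-/

section MobiusConjugate

variable {K : Type*} [Field K] (σ : K →+* K) {x ρ : K}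

theorem one_sub_mul_ne_zero_of_map_ne (hx : σ x = x) (hρ : σ ρ ≠ ρ) : 1 - ρ * x ≠ 0 := by
  intro h
  have hρx : ρ = x⁻¹ := eq_inv_of_mul_eq_one_left (sub_eq_zero.mp h).symm
  exact hρ (by rw [hρx, map_inv₀, hx])

theorem map_mul_self_of_mul_map_eq_neg_one (hx : σ x = x) (hρ : σ ρ * ρ = -1)
    (hden : 1 - ρ * x ≠ 0) :
    σ ((x + ρ) / (1 - ρ * x)) * ((x + ρ) / (1 - ρ * x)) = -1 := by
  have hσden : 1 - σ ρ * x ≠ 0 := by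
    simpa [hx] using (map_ne_zero σ).mpr hden
  rw [map_div₀, map_add, map_sub, map_mul, map_one, hx, div_mul_div_comm,
    div_eq_iff (mul_ne_zero hσden hden)]
  linear_combination (x ^ 2 + 1) * hρ

end MobiusConjugate

theorem exists_ringHom_eq_pow_of_dvd_card {K : Type*} [Field K] [Fintype K] {q : ℕ}
    (hq : q ∣ Fintype.card K) : ∃ σ : K →+* K, ∀ z, σ z = z ^ q := by
  obtain ⟨p, _, m, hp, hcard⟩ := FiniteField.card' K
  obtain ⟨i, -, rfl⟩ := (Nat.dvd_prime_pow hp).mp (hcard ▸ hq)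
  have : Fact p.Prime := ⟨hp⟩
  exact ⟨iterateFrobenius K p i, iterateFrobenius_def p i⟩

theorem sigma_mem_Delta_general
    (q : ℕ)
    (K : Type*) [Field K] [Fintype K] (hK : Fintype.card K = q ^ 2)
    (ρ : K) (hρ1 : ρ ^ (q + 1) = -1) (hρ2 : ρ ^ q ≠ ρ) :
    ∀ x : K, x ^ q = x → ((x + ρ) / (1 - ρ * x)) ^ (q + 1) = -1 := by
  intro x hx
  obtain ⟨σ, hσ⟩ : ∃ σ : K →+* K, ∀ z, σ z = z ^ q :=
    exists_ringHom_eq_pow_of_dvd_card (hK ▸ dvd_pow_self q two_ne_zero)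
  rw [← hσ] at hx hρ2
  rw [pow_succ, ← hσ] at hρ1 ⊢
  exact map_mul_self_of_mul_map_eq_neg_one σ hx hρ1 (one_sub_mul_ne_zero_of_map_ne σ hx hρ2)

/-- If `q` is an odd prime power and `ρ ∈ F_{q²}` satisfies `ρ^(q+1) = -1` and `ρ ∉ F_q`
(the fixed field of the Frobenius `y ↦ y^q`), then for every `x ∈ F_q` the element
`y = (x + ρ)/(1 - ρ*x)` satisfies `y^(q+1) = -1`. -/
theorem sigma_mem_Delta
    (q : ℕ) (hq : IsPrimePow q) (hodd : Odd q)
    (K : Type*) [Field K] [Fintype K] (hK : Fintype.card K = q ^ 2)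
    (ρ : K) (hρ1 : ρ ^ (q + 1) = -1) (hρ2 : ρ ^ q ≠ ρ) :
    ∀ x : K, x ^ q = x → ((x + ρ) / (1 - ρ * x)) ^ (q + 1) = -1 :=
  sigma_mem_Delta_general q K hK ρ hρ1 hρ2
end

section
/- Let q be an odd prime power and let ρ ∈ F_{q²} satisfy ρ^{q+1} = −1 and ρ ∉ F_q. Define σ from Ω = F_q ∪ {∞} to Δ = {y ∈ F_{q²} : y^{q+1} = −1} by σ(x) = (x + ρ)/(1 − ρx) for x ∈ F_q and σ(∞) = −1/ρ. Then σ is a well-defined bijection from Ω onto Δ, whose inverse τ is given by τ(y) = (y − ρ)/(1 + ρy) for y ∈ Δ with 1 + ρy ≠ 0 and τ(−1/ρ) = ∞. -/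
/-!
Let `φ = (· ^ q)` be the Frobenius of `F_{q²}` over `F_q`. Then `F_q` is the fixed field of `φ`,
`Δ = {y | φ y * y = -1}` and `ρ` lies in `Δ` but is not fixed by `φ`. The Möbius transformations
`t ↦ (t + ρ)/(1 - ρ t)` and `y ↦ (y - ρ)/(1 + ρ y)` are mutually inverse (their matrices multiply
to `(1 + ρ²) • 1`, and `1 + ρ² ≠ 0` because `ρ² = -1 = φ ρ * ρ` would force `φ ρ = ρ`), and a short
computation with `φ ρ * ρ = -1` shows that the first sends fixed points of `φ` into `Δ` while the
second sends `Δ` to fixed points of `φ`.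
-/

open scoped OnePoint

/-- The map `σ : Ω = F_q ∪ {∞} → F_{q²}` given by `σ(x) = (x + ρ)/(1 - ρ*x)` for
`x ∈ F_q` (embedded in `F_{q²}` via `e`) and `σ(∞) = -1/ρ`. -/
noncomputable def sigmaMap {F K : Type*} [Field F] [Field K] (e : F →+* K) (ρ : K) :
    OnePoint F → K :=
  fun x => Option.elim x (-1 / ρ) (fun t => (e t + ρ) / (1 - ρ * e t))

section Mobius

variable {K : Type*} [Field K] {ρ : K}

theorem cayley_inv_cayley (hρ : 1 + ρ ^ 2 ≠ 0) {t : K} (ht : 1 - ρ * t ≠ 0) :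
    1 + ρ * ((t + ρ) / (1 - ρ * t)) ≠ 0 ∧
      ((t + ρ) / (1 - ρ * t) - ρ) / (1 + ρ * ((t + ρ) / (1 - ρ * t))) = t := by
  have hden : 1 + ρ * ((t + ρ) / (1 - ρ * t)) = (1 + ρ ^ 2) / (1 - ρ * t) := by
    field_simp
    ring
  have hnum : (t + ρ) / (1 - ρ * t) - ρ = t * ((1 + ρ ^ 2) / (1 - ρ * t)) := by
    rw [div_sub' ht, mul_div_assoc']
    ring
  refine ⟨hden ▸ div_ne_zero hρ ht, ?_⟩
  rw [hnum, hden, mul_div_cancel_right₀ t (div_ne_zero hρ ht)]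

theorem cayley_cayleyInv (hρ : 1 + ρ ^ 2 ≠ 0) {y : K} (hy : 1 + ρ * y ≠ 0) :
    ((y - ρ) / (1 + ρ * y) + ρ) / (1 - ρ * ((y - ρ) / (1 + ρ * y))) = y := by
  have hden : 1 - ρ * ((y - ρ) / (1 + ρ * y)) = (1 + ρ ^ 2) / (1 + ρ * y) := by
    field_simp
    ring
  have hnum : (y - ρ) / (1 + ρ * y) + ρ = y * ((1 + ρ ^ 2) / (1 + ρ * y)) := by
    rw [div_add' _ _ _ hy, mul_div_assoc']
    ring
  rw [hnum, hden, mul_div_cancel_right₀ y (div_ne_zero hρ hy)]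

end Mobius

section Conjugation

variable {K : Type*} [Field K] (φ : K →+* K) {ρ : K}

theorem ne_zero_of_conj_mul_self (hρ : φ ρ * ρ = -1) : ρ ≠ 0 := by
  rintro rfl
  simp at hρ

theorem one_add_sq_ne_zero_of_conj (hρ : φ ρ * ρ = -1) (hρφ : φ ρ ≠ ρ) : 1 + ρ ^ 2 ≠ 0 := fun h ↦
  hρφ (mul_right_cancel₀ (ne_zero_of_conj_mul_self φ hρ) (by linear_combination hρ - h))

theorem one_sub_mul_ne_zero_of_conj (hρφ : φ ρ ≠ ρ) {t : K} (ht : φ t = t) : 1 - ρ * t ≠ 0 := by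
  intro h
  have hρt : ρ = t⁻¹ := eq_inv_of_mul_eq_one_left (by linear_combination -h)
  exact hρφ (by rw [hρt, map_inv₀, ht])

theorem conj_mul_self_cayley (hρ : φ ρ * ρ = -1) (hρφ : φ ρ ≠ ρ) {t : K} (ht : φ t = t) :
    φ ((t + ρ) / (1 - ρ * t)) * ((t + ρ) / (1 - ρ * t)) = -1 := by
  have hnum : t + ρ ≠ 0 := fun h ↦ hρφ (by rw [eq_neg_of_add_eq_zero_right h, map_neg, ht])
  -- `(1 - φ ρ * t) * ρ = t + ρ`, so the conjugate denominator does not vanish either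
  have hden : 1 - φ ρ * t ≠ 0 := fun h ↦
    hnum (by linear_combination ρ * h + t * hρ)
  rw [map_div₀, map_add, map_sub, map_one, map_mul, ht, div_mul_div_comm,
    div_eq_iff (mul_ne_zero hden (one_sub_mul_ne_zero_of_conj φ hρφ ht))]
  linear_combination (1 + t ^ 2) * hρ

theorem conj_cayleyInv (hρ : φ ρ * ρ = -1) {y : K} (hy : φ y * y = -1) (hy' : 1 + ρ * y ≠ 0) :
    φ ((y - ρ) / (1 + ρ * y)) = (y - ρ) / (1 + ρ * y) := by
  -- `(1 + φ ρ * φ y) * (ρ * y) = 1 + ρ * y`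
  have hden : 1 + φ ρ * φ y ≠ 0 := fun h ↦
    hy' (by linear_combination (ρ * y) * h - (φ y * y) * hρ + hy)
  rw [map_div₀, map_sub, map_add, map_one, map_mul, div_eq_div_iff hden hy']
  linear_combination (φ y - y) * hρ + (ρ - φ ρ) * hy

end Conjugation

section FixedField

variable {F K : Type*} [Field F] [Fintype F] [Field K] (e : F →+* K)

open Polynomial in
theorem mem_range_iff_pow_card_eq_self {y : K} : y ∈ Set.range e ↔ y ^ Fintype.card F = y := by
  refine ⟨?_, fun hy ↦ ?_⟩
  · rintro ⟨x, rfl⟩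
    rw [← map_pow, FiniteField.pow_card]
  -- `X ^ q - X` has all `q` elements of `F` as roots, so its image over `K` has no others
  set P : F[X] := X ^ Fintype.card F - X
  have hP : P ≠ 0 := FiniteField.X_pow_card_sub_X_ne_zero F Fintype.one_lt_card
  have hroots : (P.map e).roots = Finset.univ.val.map e := by
    rw [← FiniteField.roots_X_pow_card_sub_X,
      roots_map_of_injective_of_card_eq_natDegree e.injective]
    rw [FiniteField.roots_X_pow_card_sub_X,
      FiniteField.X_pow_card_sub_X_natDegree_eq F Fintype.one_lt_card]
    rfl
  have hyP : y ∈ (P.map e).roots := by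
    rw [mem_roots (map_ne_zero hP)]
    simp [P, hy]
  simpa [hroots] using hyP

end FixedField

-- off `Δ` the value is junk: `Function.invFun e` of a point outside the range of `e`
open Classical in
noncomputable def tauMap {F K : Type*} [Field F] [Field K] (e : F →+* K) (ρ : K) :
    K → OnePoint F :=
  fun y ↦ if 1 + ρ * y = 0 then ∞ else (Function.invFun e ((y - ρ) / (1 + ρ * y)) : F)

section CayleyMaps

variable {F K : Type*} [Field F] [Field K] {e : F →+* K} {φ : K →+* K} {ρ : K}

@[simp]
theorem sigmaMap_infty : sigmaMap e ρ ∞ = -1 / ρ := rfl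

@[simp]
theorem sigmaMap_coe (x : F) : sigmaMap e ρ x = (e x + ρ) / (1 - ρ * e x) := rfl

theorem one_add_mul_neg_one_div (hρ : ρ ≠ 0) : 1 + ρ * (-1 / ρ) = 0 := by
  field_simp
  ring

theorem tauMap_of_eq_zero {y : K} (hy : 1 + ρ * y = 0) : tauMap e ρ y = ∞ := if_pos hy

theorem tauMap_eq_coe {y : K} (hy : 1 + ρ * y ≠ 0) {x : F} (hx : e x = (y - ρ) / (1 + ρ * y)) :
    tauMap e ρ y = x := by
  rw [tauMap, if_neg hy, ← hx, Function.leftInverse_invFun e.injective x]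

theorem conj_mul_self_sigmaMap (hρ : φ ρ * ρ = -1) (hρφ : φ ρ ≠ ρ) (he : ∀ x, φ (e x) = e x)
    (x : OnePoint F) : φ (sigmaMap e ρ x) * sigmaMap e ρ x = -1 := by
  induction x using OnePoint.rec with
  | infty =>
    rw [sigmaMap_infty, map_div₀, map_neg, map_one, div_mul_div_comm, hρ]
    norm_num
  | coe x => exact conj_mul_self_cayley φ hρ hρφ (he x)

theorem tauMap_sigmaMap (hρ : φ ρ * ρ = -1) (hρφ : φ ρ ≠ ρ) (he : ∀ x, φ (e x) = e x)
    (x : OnePoint F) : tauMap e ρ (sigmaMap e ρ x) = x := by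
  induction x using OnePoint.rec with
  | infty => exact tauMap_of_eq_zero (one_add_mul_neg_one_div (ne_zero_of_conj_mul_self φ hρ))
  | coe x =>
    obtain ⟨hne, hinv⟩ := cayley_inv_cayley (one_add_sq_ne_zero_of_conj φ hρ hρφ)
      (one_sub_mul_ne_zero_of_conj φ hρφ (he x))
    exact tauMap_eq_coe hne hinv.symm

theorem sigmaMap_tauMap (hρ : φ ρ * ρ = -1) (hρφ : φ ρ ≠ ρ)
    (hfix : ∀ z, φ z = z → z ∈ Set.range e) {y : K} (hy : φ y * y = -1) :
    sigmaMap e ρ (tauMap e ρ y) = y := by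
  by_cases hc : 1 + ρ * y = 0
  · rw [tauMap_of_eq_zero hc, sigmaMap_infty, div_eq_iff (ne_zero_of_conj_mul_self φ hρ)]
    linear_combination -hc
  · obtain ⟨x, hx⟩ := hfix _ (conj_cayleyInv φ hρ hy hc)
    rw [tauMap_eq_coe hc hx, sigmaMap_coe, hx]
    exact cayley_cayleyInv (one_add_sq_ne_zero_of_conj φ hρ hρφ) hc

end CayleyMaps

theorem sigma_bijOn_Delta_general
    (q : ℕ)
    (F K : Type*) [Field F] [Fintype F] [Field K]
    (hF : Fintype.card F = q)
    (e : F →+* K) (ρ : K) (hρ1 : ρ ^ (q + 1) = -1) (hρ2 : ρ ∉ Set.range e) :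
    Set.BijOn (sigmaMap e ρ) Set.univ {y : K | y ^ (q + 1) = -1} ∧
    ∃ τ : K → OnePoint F,
      (∀ x : OnePoint F, τ (sigmaMap e ρ x) = x) ∧
      (∀ y : K, y ^ (q + 1) = -1 → sigmaMap e ρ (τ y) = y) ∧
      (∀ y : K, y ^ (q + 1) = -1 → 1 + ρ * y ≠ 0 →
        ∃ x : F, τ y = (x : OnePoint F) ∧ e x = (y - ρ) / (1 + ρ * y)) ∧
      τ (-1 / ρ) = ∞ := by
  subst hF
  let φ : K →+* K := letI := e.toAlgebra; FiniteField.frobeniusAlgHom F K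
  have hΔ (y : K) : y ^ (Fintype.card F + 1) = -1 ↔ φ y * y = -1 := by
    rw [pow_succ]
    rfl
  have hfix (z : K) : φ z = z ↔ z ∈ Set.range e := (mem_range_iff_pow_card_eq_self e).symm
  have hρ : φ ρ * ρ = -1 := (hΔ ρ).1 hρ1
  have hρφ : φ ρ ≠ ρ := fun h ↦ hρ2 ((hfix ρ).1 h)
  have he (x : F) : φ (e x) = e x := (hfix _).2 ⟨x, rfl⟩
  have hleft := tauMap_sigmaMap hρ hρφ he
  have hright (y : K) (hy : y ^ (Fintype.card F + 1) = -1) : sigmaMap e ρ (tauMap e ρ y) = y :=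
    sigmaMap_tauMap hρ hρφ (fun z ↦ (hfix z).1) ((hΔ y).1 hy)
  refine ⟨Set.InvOn.bijOn ⟨fun x _ ↦ hleft x, hright⟩
      (fun x _ ↦ (hΔ _).2 (conj_mul_self_sigmaMap hρ hρφ he x)) (Set.mapsTo_univ _ _),
    tauMap e ρ, hleft, hright, fun y hy hc ↦ ?_,
    tauMap_of_eq_zero (one_add_mul_neg_one_div (ne_zero_of_conj_mul_self φ hρ))⟩
  obtain ⟨x, hx⟩ := (hfix _).1 (conj_cayleyInv φ hρ ((hΔ y).1 hy) hc)
  exact ⟨x, tauMap_eq_coe hc hx, hx⟩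

/-- Let `q` be an odd prime power, `K = F_{q²}`, `F = F_q` embedded in `K` via `e`, and let
`ρ ∈ K` satisfy `ρ^(q+1) = -1` and `ρ ∉ F_q`. Then `σ : Ω = F_q ∪ {∞} → K`, defined by
`σ(x) = (x + ρ)/(1 - ρ*x)` and `σ(∞) = -1/ρ`, is a bijection of `Ω` onto
`Δ = {y : y^(q+1) = -1}`, and its inverse `τ` satisfies `τ(y) = (y - ρ)/(1 + ρ*y)`
(as an element of `F_q`) whenever `1 + ρ*y ≠ 0`, and `τ(-1/ρ) = ∞`. -/
theorem sigma_bijOn_Delta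
    (q : ℕ) (hq : IsPrimePow q) (hodd : Odd q)
    (F K : Type*) [Field F] [Fintype F] [Field K] [Fintype K]
    (hF : Fintype.card F = q) (hK : Fintype.card K = q ^ 2)
    (e : F →+* K) (ρ : K) (hρ1 : ρ ^ (q + 1) = -1) (hρ2 : ρ ∉ Set.range e) :
    Set.BijOn (sigmaMap e ρ) Set.univ {y : K | y ^ (q + 1) = -1} ∧
    ∃ τ : K → OnePoint F,
      (∀ x : OnePoint F, τ (sigmaMap e ρ x) = x) ∧
      (∀ y : K, y ^ (q + 1) = -1 → sigmaMap e ρ (τ y) = y) ∧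
      (∀ y : K, y ^ (q + 1) = -1 → 1 + ρ * y ≠ 0 →
        ∃ x : F, τ y = (x : OnePoint F) ∧ e x = (y - ρ) / (1 + ρ * y)) ∧
      τ (-1 / ρ) = ∞ :=
  sigma_bijOn_Delta_general q F K hF e ρ hρ1 hρ2
end
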